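/- arXiv:2211.15728 — 2 statements merged into one kernel-verified Lean document; each statement's English description precedes it below -/
import Mathlib

section
/- If τc i > 0 for all i and s is a critical point of the direct-ROI loss L (i.e., for every i the function t ↦ L(Function.update s i t) has derivative 0 at s i), then for every i one has σ(s i) = τr i / τc i, so q i is an unbiased value of the ROI τr i / τc i. -/
/-!
Writing `q = σ(t)`, the log-odds `log (q / (1 - q))` is `t` itself and `log (1 - q)` is the negative
softplus `-log (1 + exp t)`, whose derivative is `-σ(t)`. So `L` is a sum of separate functions
of the coordinates, and its partial derivative in `s i` is `-(τr i - τc i * σ(s i)) / N`; this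
vanishes exactly when `σ(s i) = τr i / τc i`.
-/

/-- The sigmoid function. -/
noncomputable def sigm (t : ℝ) : ℝ := 1 / (1 + Real.exp (-t))

open Real

lemma sigm_eq_sigmoid : sigm = sigmoid := by
  funext t
  rw [sigm, sigmoid_def, one_div]

namespace Real

lemma one_sub_sigmoid (x : ℝ) : 1 - sigmoid x = (1 + exp x)⁻¹ := by
  rw [← sigmoid_neg, sigmoid_def, neg_neg]

lemma sigmoid_div_one_sub_sigmoid (x : ℝ) : sigmoid x / (1 - sigmoid x) = exp x := by
  rw [← sigmoid_neg, ← sigmoid_mul_rexp_neg, div_mul_cancel_left₀ (sigmoid_pos x).ne', exp_neg,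
    inv_inv]

lemma hasDerivAt_log_one_add_exp (x : ℝ) :
    HasDerivAt (fun t => log (1 + exp t)) (sigmoid x) x := by
  have hpos : 0 < 1 + exp x := by positivity
  have h := ((hasDerivAt_exp x).const_add 1).log hpos.ne'
  convert h using 1
  rw [sigmoid_def, exp_neg]
  field_simp
  ring

end Real

lemma hasDerivAt_roi_term (a b x : ℝ) :
    HasDerivAt (fun t => a * log (sigm t / (1 - sigm t)) + b * log (1 - sigm t))
      (a - b * sigm x) x := by
  have hsoftplus : (fun t => a * log (sigm t / (1 - sigm t)) + b * log (1 - sigm t))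
      = fun t => a * t - b * log (1 + exp t) := by
    funext t
    rw [sigm_eq_sigmoid, sigmoid_div_one_sub_sigmoid, one_sub_sigmoid, log_exp, log_inv]
    ring
  rw [hsoftplus, sigm_eq_sigmoid]
  exact ((hasDerivAt_id x).const_mul a).sub ((hasDerivAt_log_one_add_exp x).const_mul b)
    |>.congr_deriv (by simp)

lemma hasDerivAt_sum_update {ι 𝕜 F : Type*} [Fintype ι] [DecidableEq ι]
    [NontriviallyNormedField 𝕜] [NormedAddCommGroup F] [NormedSpace 𝕜 F]
    (f : ι → 𝕜 → F) (s : ι → 𝕜) (i : ι) {f' : F} (hf : HasDerivAt (f i) f' (s i)) :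
    HasDerivAt (fun t => ∑ j, f j (Function.update s i t j)) f' (s i) := by
  have hsplit : (fun t => ∑ j, f j (Function.update s i t j))
      = fun t => f i t + ∑ j ∈ Finset.univ.erase i, f j (s j) := by
    funext t
    rw [← Finset.add_sum_erase _ _ (Finset.mem_univ i), Function.update_self]
    congr 1
    refine Finset.sum_congr rfl fun j hj => ?_
    rw [Function.update_of_ne (Finset.ne_of_mem_erase hj)]
  rw [hsplit]
  exact hf.add_const _

theorem direct_roi_critical_point_general
    (N : ℕ) (s τr τc : Fin N → ℝ)
    (L : (Fin N → ℝ) → ℝ)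
    (hL : L = fun u : Fin N → ℝ => -(1 / (N : ℝ)) *
      ∑ i, (τr i * Real.log (sigm (u i) / (1 - sigm (u i)))
        + τc i * Real.log (1 - sigm (u i))))
    (hτc : ∀ i, 0 < τc i)
    (hcrit : ∀ i : Fin N, HasDerivAt (fun t : ℝ => L (Function.update s i t)) 0 (s i)) :
    ∀ i : Fin N, sigm (s i) = τr i / τc i := by
  intro i
  have hpartial : HasDerivAt (fun t : ℝ => L (Function.update s i t))
      (-(1 / (N : ℝ)) * (τr i - τc i * sigm (s i))) (s i) := by
    subst hL
    exact (hasDerivAt_sum_update (fun j t => τr j * log (sigm t / (1 - sigm t))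
      + τc j * log (1 - sigm t)) s i (hasDerivAt_roi_term _ _ _)).const_mul _
  have hN : (N : ℝ) ≠ 0 := by exact_mod_cast i.pos.ne'
  have hzero : τr i - τc i * sigm (s i) = 0 := by
    simpa [hN] using ((hcrit i).unique hpartial).symm
  rw [eq_div_iff (hτc i).ne']
  linarith

/-- at a critical point of the direct-ROI loss, `σ (s i)` is an
unbiased estimation of the ROI `τr i / τc i`. -/
theorem direct_roi_critical_point
    (N : ℕ) (hN : 0 < N) (s τr τc : Fin N → ℝ)
    (L : (Fin N → ℝ) → ℝ)
    (hL : L = fun u : Fin N → ℝ => -(1 / (N : ℝ)) *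
      ∑ i, (τr i * Real.log (sigm (u i) / (1 - sigm (u i)))
        + τc i * Real.log (1 - sigm (u i))))
    (hτc : ∀ i, 0 < τc i)
    (hcrit : ∀ i : Fin N, HasDerivAt (fun t : ℝ => L (Function.update s i t)) 0 (s i)) :
    ∀ i : Fin N, sigm (s i) = τr i / τc i :=
  direct_roi_critical_point_general N s τr τc L hL hτc hcrit
end

section
/- If 0 < τr i < τc i for all i, then the direct-ROI loss L attains a unique global minimum on ℝ^N, namely at the point s* defined by s* i = Real.log (τr i / (τc i − τr i)) (equivalently σ(s* i) = τr i / τc i); that is, L(s*) ≤ L(s) for all s, with equality only when s = s*. -/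
/-!
In the logit variable `t = s i` the `i`-th summand of `N * L` is
`τc i * log (1 + exp t) - τr i * t`. Writing `a = τr i / (τc i - τr i)` and `x = exp t`, one has
`(1 + x) / (1 + a) = (1 - p) • 1 + p • (x / a)` with `p = τr i / τc i ∈ (0, 1)`, so strict
concavity of `log` gives `p * (t - log a) < log (1 + x) - log (1 + a)` whenever `x ≠ a`: each
summand is uniquely minimised at `t = log a`, hence so is the sum.
-/

open Real

lemma one_sub_sigm (t : ℝ) : 1 - sigm t = (1 + exp t)⁻¹ := by
  have : 0 < 1 + exp t := by positivity
  rw [sigm, exp_neg]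
  field_simp
  ring

lemma sigm_div_one_sub_sigm (t : ℝ) : sigm t / (1 - sigm t) = exp t := by
  have : 0 < 1 + exp t := by positivity
  rw [one_sub_sigm, sigm, exp_neg]
  field_simp
  ring

noncomputable def roiTerm (r c t : ℝ) : ℝ := c * log (1 + exp t) - r * t

lemma roiTerm_eq_neg (r c t : ℝ) :
    roiTerm r c t = -(r * log (sigm t / (1 - sigm t)) + c * log (1 - sigm t)) := by
  rw [sigm_div_one_sub_sigm, one_sub_sigm, log_exp, log_inv, roiTerm]
  ring

lemma roiTerm_lt_of_ne {r c t : ℝ} (hr : 0 < r) (hrc : r < c) (ht : t ≠ log (r / (c - r))) :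
    roiTerm r c (log (r / (c - r))) < roiTerm r c t := by
  have hc : 0 < c := hr.trans hrc
  have hcr : 0 < c - r := sub_pos.2 hrc
  set a := r / (c - r) with ha
  have ha0 : 0 < a := div_pos hr hcr
  clear_value a
  have hxa : exp t / a ≠ 1 := by
    rw [ne_eq, div_eq_one_iff_eq ha0.ne', ← exp_log ha0, exp_eq_exp]
    exact ht
  have hjensen := strictConcaveOn_log_Ioi.2 (Set.mem_Ioi.2 one_pos)
    (Set.mem_Ioi.2 (div_pos (exp_pos t) ha0)) hxa.symm (div_pos hcr hc) (div_pos hr hc)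
    (by field_simp; ring)
  have hmix : ((c - r) / c) • (1 : ℝ) + (r / c) • (exp t / a) = (1 + exp t) / (1 + a) := by
    rw [ha, smul_eq_mul, smul_eq_mul]
    field_simp [hcr.ne']
    ring
  rw [hmix, smul_eq_mul, smul_eq_mul, log_one, mul_zero, zero_add,
    log_div (exp_pos t).ne' ha0.ne', log_exp,
    log_div (by positivity) (by positivity), div_mul_eq_mul_div, div_lt_iff₀' hc] at hjensen
  rw [roiTerm, roiTerm, exp_log ha0]
  linarith

lemma Fintype.sum_lt_sum_of_forall_lt_of_ne {ι α M : Type*} [Fintype ι] [AddCommMonoid M]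
    [PartialOrder M] [IsOrderedCancelAddMonoid M] {f : ι → α → M} {x₀ : ι → α}
    (hf : ∀ i t, t ≠ x₀ i → f i (x₀ i) < f i t) {x : ι → α} (hx : x ≠ x₀) :
    ∑ i, f i (x₀ i) < ∑ i, f i (x i) := by
  obtain ⟨j, hj⟩ := Function.ne_iff.1 hx
  refine Finset.sum_lt_sum (fun i _ => ?_) ⟨j, Finset.mem_univ j, hf j _ hj⟩
  by_cases hi : x i = x₀ i
  · rw [hi]
  · exact (hf i _ hi).le

/-- if `0 < τr i < τc i` for all `i`, the direct-ROI loss attains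
a unique global minimum at `s* i = log (τr i / (τc i - τr i))`. -/
theorem direct_roi_unique_global_min
    (N : ℕ) (hN : 0 < N) (τr τc : Fin N → ℝ)
    (L : (Fin N → ℝ) → ℝ)
    (hL : L = fun u : Fin N → ℝ => -(1 / (N : ℝ)) *
      ∑ i, (τr i * Real.log (sigm (u i) / (1 - sigm (u i)))
        + τc i * Real.log (1 - sigm (u i))))
    (hτ : ∀ i, 0 < τr i ∧ τr i < τc i)
    (sstar : Fin N → ℝ)
    (hsstar : sstar = fun i => Real.log (τr i / (τc i - τr i))) :
    (∀ s : Fin N → ℝ, L sstar ≤ L s)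
      ∧ (∀ s : Fin N → ℝ, L s = L sstar → s = sstar) := by
  have hL_eq : ∀ u, L u = (1 / (N : ℝ)) * ∑ i, roiTerm (τr i) (τc i) (u i) := by
    intro u
    simp only [hL, roiTerm_eq_neg, Finset.sum_neg_distrib]
    ring
  have hlt : ∀ s, s ≠ sstar → L sstar < L s := by
    intro s hs
    rw [hL_eq, hL_eq]
    refine mul_lt_mul_of_pos_left (Fintype.sum_lt_sum_of_forall_lt_of_ne ?_ hs) (by positivity)
    intro i t ht
    subst hsstar
    exact roiTerm_lt_of_ne (hτ i).1 (hτ i).2 ht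
  refine ⟨fun s => ?_, fun s hs => ?_⟩
  · by_cases h : s = sstar
    · rw [h]
    · exact (hlt s h).le
  · by_contra h
    exact (hlt s h).ne' hs
end
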